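/- arXiv:2210.12312 — 7 statements merged into one kernel-verified Lean document; each statement's English description precedes it below -/
import Mathlib

section
/- Let p = 2q with q ≥ 1 an integer, and let ε ∈ [0, 2/(5(p−1))]. Then cost attains a unique minimizer x* over trajectories feasible for (p, −2/5) and a unique minimizer y* over trajectories feasible for (p, −2/5 + ε), and |x*(h) − y*(h)| = ε for every h ∈ {1,…,p}. -/
/-- A trajectory `x : ℕ → ℝ` is feasible for `(p, z)` if `x 0 = 0`, `x p = z`,
`x t ∈ [-1,1]` for all `t ≤ p`, and `|x (t+1) - x t| ≤ 4/5` for all `t < p`. -/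
def Feasible (p : ℕ) (z : ℝ) (x : ℕ → ℝ) : Prop :=
  x 0 = 0 ∧ x p = z ∧ (∀ t ≤ p, x t ∈ Set.Icc (-1 : ℝ) 1) ∧
    ∀ t < p, |x (t + 1) - x t| ≤ 4 / 5

/-- `ξ t = 4/5` if `t` is odd and `-4/5` if `t` is even. -/
noncomputable def xiTgt (t : ℕ) : ℝ := if Odd t then 4 / 5 else -(4 / 5)

/-- The cost of a trajectory: `∑_{t=0}^{p} (x t - ξ t)^2`. -/
noncomputable def cost (p : ℕ) (x : ℕ → ℝ) : ℝ :=
  ∑ t ∈ Finset.range (p + 1), (x t - xiTgt t) ^ 2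

/-- The candidate optimal trajectory. -/
noncomputable def traj (ε : ℝ) (t : ℕ) : ℝ :=
  if t = 0 then 0 else if Odd t then 2/5 + ε else -(2/5) + ε

lemma traj_zero (ε : ℝ) : traj ε 0 = 0 := by simp [traj]

lemma traj_odd (ε : ℝ) {t : ℕ} (h : Odd t) : traj ε t = 2/5 + ε := by
  have h0 : t ≠ 0 := by rcases h with ⟨k, hk⟩; omega
  simp [traj, h0, h]

lemma traj_even (ε : ℝ) {t : ℕ} (h : ¬ Odd t) (h0 : t ≠ 0) :
    traj ε t = -(2/5) + ε := by
  simp [traj, h0, h]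

lemma xiTgt_odd {t : ℕ} (h : Odd t) : xiTgt t = 4/5 := by simp [xiTgt, h]

lemma xiTgt_even {t : ℕ} (h : ¬ Odd t) : xiTgt t = -(4/5) := by simp [xiTgt, h]

lemma odd_odd (j : ℕ) : Odd (2*j+1) := ⟨j, by ring⟩

lemma even_even (j : ℕ) : ¬ Odd (2*j+2) := by
  rw [Nat.odd_iff]; omega

lemma pair_sum (f : ℕ → ℝ) (q : ℕ) :
    ∑ t ∈ Finset.range (2*q+1), f t
      = f 0 + ∑ j ∈ Finset.range q, (f (2*j+1) + f (2*j+2)) := by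
  induction q with
  | zero => simp
  | succ n ih =>
    have h : 2*(n+1)+1 = (2*n+1) + 1 + 1 := by ring
    rw [h, Finset.sum_range_succ, Finset.sum_range_succ, ih, Finset.sum_range_succ]
    have h1 : 2*n+1+1 = 2*n+2 := by omega
    rw [h1]
    ring

lemma telescope (ε : ℝ) (d : ℕ → ℝ) (q : ℕ) :
    ∑ j ∈ Finset.range q, ((ε - 2/5) * d (2*j+1) + (2/5 + ε) * d (2*j+2))
      = (∑ j ∈ Finset.range q,
          ((2/5 - (2*(j:ℝ)+1)*ε) * (d (2*j+2) - d (2*j+1))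
            + 2*(j:ℝ)*ε * (d (2*j) - d (2*j+1))))
        + 2*(q:ℝ)*ε * d (2*q) := by
  induction q with
  | zero => simp
  | succ n ih =>
    rw [Finset.sum_range_succ, Finset.sum_range_succ, ih]
    have h : 2*(n+1) = 2*n+2 := by ring
    rw [h]
    push_cast
    ring

lemma cost_decomp (p : ℕ) (x y : ℕ → ℝ) :
    cost p y = cost p x + (∑ t ∈ Finset.range (p+1), (y t - x t)^2)
      + 2 * ∑ t ∈ Finset.range (p+1), (x t - xiTgt t) * (y t - x t) := by
  unfold cost
  rw [Finset.mul_sum, ← Finset.sum_add_distrib, ← Finset.sum_add_distrib]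
  exact Finset.sum_congr rfl fun t _ => by ring

lemma key (q : ℕ) (hq : 1 ≤ q) (ε : ℝ) (hε0 : 0 ≤ ε)
    (hε1 : (2*(q:ℝ) - 1) * ε ≤ 2/5) :
    Feasible (2*q) (-(2/5) + ε) (traj ε) ∧
    (∀ y, Feasible (2*q) (-(2/5) + ε) y → cost (2*q) (traj ε) ≤ cost (2*q) y) ∧
    (∀ y, Feasible (2*q) (-(2/5) + ε) y → cost (2*q) y = cost (2*q) (traj ε) →
      ∀ t ≤ 2*q, y t = traj ε t) := by
  have hq' : (1:ℝ) ≤ (q:ℝ) := by exact_mod_cast hq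
  have hεs : ε ≤ 2/5 := by nlinarith
  have htp : traj ε (2*q) = -(2/5) + ε := by
    have h : 2*q = 2*(q-1)+2 := by omega
    rw [h, traj_even ε (even_even (q-1)) (by omega)]
  -- the key nonnegativity estimate and decomposition, for any feasible y
  have main : ∀ y, Feasible (2*q) (-(2/5) + ε) y →
      cost (2*q) y = cost (2*q) (traj ε)
        + (∑ t ∈ Finset.range (2*q+1), (y t - traj ε t)^2)
        + 2 * ∑ t ∈ Finset.range (2*q+1), (traj ε t - xiTgt t) * (y t - traj ε t) ∧
      0 ≤ ∑ t ∈ Finset.range (2*q+1), (traj ε t - xiTgt t) * (y t - traj ε t) := by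
    intro y hy
    obtain ⟨hy0, hyp, hybd, hystep⟩ := hy
    constructor
    · exact cost_decomp (2*q) (traj ε) y
    · set d : ℕ → ℝ := fun t => y t - traj ε t with hd
      have hd0 : d 0 = 0 := by simp [hd, hy0, traj_zero]
      have hdp : d (2*q) = 0 := by simp [hd, hyp, htp]
      have hstepA : ∀ j < q, 0 ≤ d (2*j+2) - d (2*j+1) := by
        intro j hj
        have h2 : 2*j+1 < 2*q := by omega
        have := (abs_le.mp (hystep (2*j+1) h2)).1
        have hidx : 2*j+1+1 = 2*j+2 := by omega
        rw [hidx] at this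
        have ht1 : traj ε (2*j+1) = 2/5 + ε := traj_odd ε (odd_odd j)
        have ht2 : traj ε (2*j+2) = -(2/5) + ε := traj_even ε (even_even j) (by omega)
        simp only [hd]
        rw [ht1, ht2]
        linarith
      have hstepB : ∀ j, 1 ≤ j → j < q → 0 ≤ d (2*j) - d (2*j+1) := by
        intro j hj1 hj2
        have h2 : 2*j < 2*q := by omega
        have := (abs_le.mp (hystep (2*j) h2)).2
        have ht1 : traj ε (2*j) = -(2/5) + ε := by
          have h : 2*j = 2*(j-1)+2 := by omega
          rw [h, traj_even ε (even_even (j-1)) (by omega)]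
        have ht2 : traj ε (2*j+1) = 2/5 + ε := traj_odd ε (odd_odd j)
        simp only [hd]
        rw [ht1, ht2]
        linarith
      have hrw : ∀ j ∈ Finset.range q,
          (traj ε (2*j+1) - xiTgt (2*j+1)) * d (2*j+1)
            + (traj ε (2*j+2) - xiTgt (2*j+2)) * d (2*j+2)
          = (ε - 2/5) * d (2*j+1) + (2/5 + ε) * d (2*j+2) := fun j _ => by
        rw [traj_odd ε (odd_odd j), xiTgt_odd (odd_odd j),
          traj_even ε (even_even j) (by omega), xiTgt_even (even_even j)]
        ring
      have h1 : 0 ≤ (∑ j ∈ Finset.range q,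
          ((2/5 - (2*(j:ℝ)+1)*ε) * (d (2*j+2) - d (2*j+1))
            + 2*(j:ℝ)*ε * (d (2*j) - d (2*j+1))))
          + 2*(q:ℝ)*ε * d (2*q) := by
        rw [hdp, mul_zero, add_zero]
        apply Finset.sum_nonneg
        intro j hj
        have hjq : j < q := Finset.mem_range.mp hj
        have hjq' : (j:ℝ) + 1 ≤ (q:ℝ) := by exact_mod_cast hjq
        have hc1 : 0 ≤ 2/5 - (2*(j:ℝ)+1)*ε := by nlinarith
        have ht1 : 0 ≤ (2/5 - (2*(j:ℝ)+1)*ε) * (d (2*j+2) - d (2*j+1)) :=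
          mul_nonneg hc1 (hstepA j hjq)
        rcases Nat.eq_zero_or_pos j with hj0 | hj0
        · subst hj0; simpa using ht1
        · have ht2 : 0 ≤ 2*(j:ℝ)*ε * (d (2*j) - d (2*j+1)) := by
            apply mul_nonneg (mul_nonneg (by positivity) hε0) (hstepB j hj0 hjq)
          exact add_nonneg ht1 ht2
      have h3 : ∑ t ∈ Finset.range (2*q+1), (traj ε t - xiTgt t) * d t
          = ∑ j ∈ Finset.range q, ((ε - 2/5) * d (2*j+1) + (2/5 + ε) * d (2*j+2)) := by
        rw [pair_sum (fun t => (traj ε t - xiTgt t) * d t) q,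
          Finset.sum_congr rfl hrw, hd0, mul_zero, zero_add]
      rw [h3, telescope ε d q]
      exact h1
  refine ⟨⟨traj_zero ε, htp, ?_, ?_⟩, ?_, ?_⟩
  · -- bounds
    intro t _
    unfold traj
    split_ifs <;> constructor <;> norm_num <;> linarith
  · -- steps
    intro t ht
    rcases Nat.even_or_odd t with he | ho
    · rcases Nat.eq_zero_or_pos t with h0 | h0
      · subst h0
        rw [traj_zero, traj_odd ε (odd_odd 0)]
        rw [abs_le]; constructor <;> linarith
      · have hne : ¬ Odd t := by rw [Nat.odd_iff]; rw [Nat.even_iff] at he; omega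
        have ho1 : Odd (t+1) := by rw [Nat.odd_iff]; rw [Nat.even_iff] at he; omega
        rw [traj_even ε hne (by omega), traj_odd ε ho1]
        rw [abs_le]; constructor <;> linarith
    · have hne : ¬ Odd (t+1) := by
        rw [Nat.odd_iff]; rw [Nat.odd_iff] at ho; omega
      rw [traj_odd ε ho, traj_even ε hne (by omega)]
      rw [abs_le]; constructor <;> linarith
  · -- minimality
    intro y hy
    obtain ⟨hdec, hG⟩ := main y hy
    have hsq : 0 ≤ ∑ t ∈ Finset.range (2*q+1), (y t - traj ε t)^2 :=
      Finset.sum_nonneg fun t _ => sq_nonneg _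
    linarith
  · -- uniqueness
    intro y hy heq t htle
    obtain ⟨hdec, hG⟩ := main y hy
    have hsq : 0 ≤ ∑ t ∈ Finset.range (2*q+1), (y t - traj ε t)^2 :=
      Finset.sum_nonneg fun t _ => sq_nonneg _
    have hzero : ∑ t ∈ Finset.range (2*q+1), (y t - traj ε t)^2 = 0 := by linarith
    have := (Finset.sum_eq_zero_iff_of_nonneg (fun t _ => sq_nonneg (y t - traj ε t))).mp
      hzero t (Finset.mem_range.mpr (by omega))
    have h2 := pow_eq_zero_iff (n := 2) (by norm_num) |>.mp this
    linarith [sub_eq_zero.mp h2]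

theorem stmt_1 (q : ℕ) (hq : 1 ≤ q) (ε : ℝ)
    (hε : ε ∈ Set.Icc (0 : ℝ) (2 / (5 * (2 * (q : ℝ) - 1)))) :
    ∃ xs ys : ℕ → ℝ,
      (Feasible (2 * q) (-(2 / 5)) xs ∧
        (∀ y, Feasible (2 * q) (-(2 / 5)) y → cost (2 * q) xs ≤ cost (2 * q) y) ∧
        (∀ y, Feasible (2 * q) (-(2 / 5)) y → cost (2 * q) y = cost (2 * q) xs →
          ∀ t ≤ 2 * q, y t = xs t)) ∧
      (Feasible (2 * q) (-(2 / 5) + ε) ys ∧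
        (∀ y, Feasible (2 * q) (-(2 / 5) + ε) y → cost (2 * q) ys ≤ cost (2 * q) y) ∧
        (∀ y, Feasible (2 * q) (-(2 / 5) + ε) y → cost (2 * q) y = cost (2 * q) ys →
          ∀ t ≤ 2 * q, y t = ys t)) ∧
      ∀ h, 1 ≤ h → h ≤ 2 * q → |xs h - ys h| = ε := by
  obtain ⟨hε0, hε2⟩ := hε
  have hq' : (1:ℝ) ≤ (q:ℝ) := by exact_mod_cast hq
  have hden : (0:ℝ) < 5*(2*(q:ℝ)-1) := by nlinarith
  have hε1 : (2*(q:ℝ)-1)*ε ≤ 2/5 := by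
    rw [le_div_iff₀ hden] at hε2
    nlinarith
  obtain ⟨hxf, hxmin, hxuniq⟩ := key q hq 0 le_rfl (by nlinarith)
  obtain ⟨hyf, hymin, hyuniq⟩ := key q hq ε hε0 hε1
  refine ⟨traj 0, traj ε, ⟨?_, ?_, ?_⟩, ⟨hyf, hymin, hyuniq⟩, ?_⟩
  · simpa using hxf
  · intro y hy; exact hxmin y (by simpa using hy)
  · intro y hy; exact hxuniq y (by simpa using hy)
  · intro h h1 h2
    have hne : h ≠ 0 := by omega
    rcases Nat.even_or_odd h with he | ho
    · have hno : ¬ Odd h := by rw [Nat.odd_iff]; rw [Nat.even_iff] at he; omega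
      rw [traj_even 0 hno hne, traj_even ε hno hne]
      have : (-(2/5)+0 : ℝ) - (-(2/5)+ε) = -ε := by ring
      rw [this, abs_neg, abs_of_nonneg hε0]
    · rw [traj_odd 0 ho, traj_odd ε ho]
      have : (2/5+0 : ℝ) - (2/5+ε) = -ε := by ring
      rw [this, abs_neg, abs_of_nonneg hε0]
end

section
/- Let q ≥ 1 be an integer and ε ∈ [0, 2/(5(2q−1))]. Then the minimum of cost over trajectories feasible for (2q, −2/5 + ε) is attained and equals 8(q+2)/25 + 2qε². -/
/-- The candidate optimal trajectory. -/
noncomputable def xOpt (ε : ℝ) (t : ℕ) : ℝ :=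
  if t = 0 then 0 else if Odd t then 2/5 + ε else -(2/5) + ε

lemma xiTgt_odd' (n : ℕ) : xiTgt (2*n+1) = 4/5 := by
  have h : Odd (2*n+1) := ⟨n, by ring⟩
  simp [xiTgt, h]

lemma xiTgt_even' (n : ℕ) : xiTgt (2*n) = -(4/5) := by
  have h : ¬ Odd (2*n) := by simp [Nat.odd_iff]
  simp [xiTgt, h]

lemma xOpt_odd (ε : ℝ) (n : ℕ) : xOpt ε (2*n+1) = 2/5 + ε := by
  have h : Odd (2*n+1) := ⟨n, by ring⟩
  have h0 : 2*n+1 ≠ 0 := by omega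
  simp [xOpt, h, h0]

lemma xOpt_even (ε : ℝ) (n : ℕ) (hn : n ≠ 0) : xOpt ε (2*n) = -(2/5) + ε := by
  have h : ¬ Odd (2*n) := by simp [Nat.odd_iff]
  have h0 : 2*n ≠ 0 := by omega
  simp [xOpt, h, h0]

lemma cost_xOpt (ε : ℝ) (n : ℕ) :
    ∑ t ∈ Finset.range (2*n+1), (xOpt ε t - xiTgt t)^2
      = 16/25 + (n : ℝ) * ((ε - 2/5)^2 + (ε + 2/5)^2) := by
  induction n with
  | zero => simp [xOpt, xiTgt]; norm_num
  | succ n ih =>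
    have h : 2*(n+1)+1 = (2*n+1)+1+1 := by ring
    rw [h, Finset.sum_range_succ, Finset.sum_range_succ, ih]
    have h2 : (2*n+1)+1 = 2*(n+1) := by ring
    rw [h2, xiTgt_odd', xOpt_odd, xiTgt_even' (n+1), xOpt_even ε (n+1) (by omega)]
    push_cast
    ring

theorem stmt_3 (q : ℕ) (hq : 1 ≤ q) (ε : ℝ)
    (hε : ε ∈ Set.Icc (0 : ℝ) (2 / (5 * (2 * (q : ℝ) - 1)))) :
    ∃ x : ℕ → ℝ, Feasible (2 * q) (-(2 / 5) + ε) x ∧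
      cost (2 * q) x = 8 * ((q : ℝ) + 2) / 25 + 2 * (q : ℝ) * ε ^ 2 ∧
      ∀ y, Feasible (2 * q) (-(2 / 5) + ε) y → cost (2 * q) x ≤ cost (2 * q) y := by
  obtain ⟨hε0, hεu⟩ := hε
  have hq1 : (1 : ℝ) ≤ (q : ℝ) := by exact_mod_cast hq
  have hqpos : (0 : ℝ) < 5 * (2 * (q : ℝ) - 1) := by nlinarith
  have hεq : (4 * (q : ℝ) - 2) * ε ≤ 4/5 := by
    have := (le_div_iff₀ hqpos).mp hεu
    nlinarith
  have hε2 : ε ≤ 2/5 := by nlinarith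
  refine ⟨xOpt ε, ⟨?_, ?_, ?_, ?_⟩, ?_, ?_⟩
  · simp [xOpt]
  · rw [xOpt_even ε q (by omega)]
  · intro t _
    rcases Nat.eq_zero_or_pos t with h0 | h0
    · subst h0; simp [xOpt]
    · unfold xOpt
      have h0' : t ≠ 0 := by omega
      simp only [h0', if_false]
      split_ifs <;> constructor <;> linarith
  · intro t ht
    rcases Nat.even_or_odd t with he | ho
    · obtain ⟨m, hm⟩ := he
      have hmt : t = 2*m := by omega
      rcases Nat.eq_zero_or_pos m with hm0 | hm0
      · subst hm0
        have : t = 0 := by omega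
        subst this
        rw [show (0:ℕ)+1 = 2*0+1 from rfl, xOpt_odd]
        simp [xOpt]
        rw [abs_of_nonneg (by linarith)]
        linarith
      · subst hmt
        rw [xOpt_odd, xOpt_even ε m (by omega)]
        rw [show (2/5 + ε) - (-(2/5) + ε) = 4/5 by ring]
        rw [abs_of_nonneg (by norm_num)]
    · obtain ⟨m, hm⟩ := ho
      subst hm
      rw [show 2*m+1+1 = 2*(m+1) by ring, xOpt_even ε (m+1) (by omega), xOpt_odd]
      rw [show (-(2/5) + ε) - (2/5 + ε) = -(4/5) by ring]
      rw [abs_neg, abs_of_nonneg (by norm_num)]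
  · unfold cost
    rw [show 2*q+1 = 2*q+1 from rfl, cost_xOpt]
    ring
  · intro y hy
    obtain ⟨hy0, hyp, hybd, hystep⟩ := hy
    obtain ⟨d, hd⟩ : ∃ d : ℕ → ℝ, ∀ t, d t = y t - xOpt ε t := ⟨_, fun t => rfl⟩
    have hdq : d (2*q) = 0 := by
      rw [hd, hyp, xOpt_even ε q (by omega)]
      ring
    -- key claim by induction
    have claim : ∀ k, k ≤ q →
        4*(k:ℝ)*ε*(d (2*k)) ≤ ∑ t ∈ Finset.range (2*k+1), 2*(xOpt ε t - xiTgt t)*(d t) := by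
      intro k
      induction k with
      | zero =>
        intro _
        have : d 0 = 0 := by rw [hd]; simp [hy0, xOpt]
        simp [this]
      | succ k ih =>
        intro hk1
        have hk : k ≤ q := by omega
        have ihk := ih hk
        have hcast : ((k:ℝ)+1) ≤ (q:ℝ) := by exact_mod_cast hk1
        rw [show 2*(k+1)+1 = (2*k+1)+1+1 by ring, Finset.sum_range_succ, Finset.sum_range_succ]
        rw [xiTgt_odd', xOpt_odd]
        rw [show (2*k+1)+1 = 2*(k+1) by ring, xiTgt_even' (k+1), xOpt_even ε (k+1) (by omega)]
        -- step constraints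
        have hA : d (2*k+1) ≤ d (2*(k+1)) := by
          have hstep := hystep (2*k+1) (by omega)
          have := (abs_le.mp hstep).1
          have e1 : xOpt ε (2*k+1) = 2/5 + ε := xOpt_odd ε k
          have e2 : xOpt ε (2*k+1+1) = -(2/5) + ε := by
            rw [show 2*k+1+1 = 2*(k+1) by ring]; exact xOpt_even ε (k+1) (by omega)
          rw [hd, hd, show 2*(k+1) = 2*k+1+1 by ring, e1, e2]
          linarith
        have hB : 4*(k:ℝ)*ε * d (2*k+1) ≤ 4*(k:ℝ)*ε * d (2*k) := by
          rcases Nat.eq_zero_or_pos k with hk0 | hk0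
          · subst hk0; simp
          · have hstep := hystep (2*k) (by omega)
            have := (abs_le.mp hstep).2
            have e1 : xOpt ε (2*k+1) = 2/5 + ε := xOpt_odd ε k
            have e2 : xOpt ε (2*k) = -(2/5) + ε := xOpt_even ε k (by omega)
            have hdle : d (2*k+1) ≤ d (2*k) := by
              rw [hd, hd, e1, e2]
              linarith
            have hco : (0:ℝ) ≤ 4*(k:ℝ)*ε := by positivity
            exact mul_le_mul_of_nonneg_left hdle hco
        have hC : 4*(k:ℝ)*ε + 2*ε - 4/5 ≤ 0 := by nlinarith
        have hAC : (4*(k:ℝ)*ε + 2*ε - 4/5) * d (2*(k+1)) ≤ (4*(k:ℝ)*ε + 2*ε - 4/5) * d (2*k+1) :=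
          mul_le_mul_of_nonpos_left hA hC
        push_cast
        linarith [ihk, hB, hAC]
    have hS : (0:ℝ) ≤ ∑ t ∈ Finset.range (2*q+1), 2*(xOpt ε t - xiTgt t)*(d t) := by
      have := claim q le_rfl
      rw [hdq] at this
      simpa using this
    have hident : cost (2*q) y = cost (2*q) (xOpt ε)
        + ∑ t ∈ Finset.range (2*q+1), (2*(xOpt ε t - xiTgt t)*(d t) + (d t)^2) := by
      unfold cost
      rw [← Finset.sum_add_distrib]
      apply Finset.sum_congr rfl
      intro t _
      rw [hd]
      ring
    have hsq : (0:ℝ) ≤ ∑ t ∈ Finset.range (2*q+1), (d t)^2 :=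
      Finset.sum_nonneg fun t _ => sq_nonneg _
    rw [hident, Finset.sum_add_distrib]
    linarith
end

section
/- Let q ≥ 1 be an integer and ε ∈ (2/(5(2q−1)), 7/5]. Then every trajectory feasible for (2q, −2/5 + ε) has cost at least 8(q+2)/25 + 8q/(25(2q−1)²). -/
/-!
Fold the trajectory: with `u j = 4/5 - x (2j+1)` and `v j = x (2j+2) + 4/5` the cost is
`(x 0 + 4/5)² + ∑ (u j² + v j²)`, and the step bound says that any two consecutive terms of the
alternating chain `u 0, v 0, u 1, …, v (k-1), u k` (where `q = k + 1`) sum to at least `c = 4/5`.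
Adding these constraints with weights `k - j` and `j + 1` gives `k ∑ u + (k+1) ∑ v ≥ c k (k+1)`;
completing squares around the minimiser `u ≡ c k/(2k+1)`, `v ≡ c (k+1)/(2k+1)` then gives
`∑ u² + ∑ v² ≥ c² k (k+1)/(2k+1)`. The remaining term `v k = 2/5 + ε` lies outside the chain and
is at least `2/5 + 2/(5(2k+1))` by the hypothesis on `ε`.
-/

open Finset

theorem Finset.sum_range_two_mul_add_one {M : Type*} [AddCommMonoid M] (f : ℕ → M) (n : ℕ) :
    ∑ t ∈ range (2 * n + 1), f t = f 0 + ∑ j ∈ range n, (f (2 * j + 1) + f (2 * j + 2)) := by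
  induction n with
  | zero => simp
  | succ n ih =>
    rw [show 2 * (n + 1) + 1 = 2 * n + 1 + 1 + 1 by ring, sum_range_succ, sum_range_succ, ih,
      sum_range_succ, add_assoc, add_assoc]

theorem sum_range_sub_mul_add_succ_mul (k : ℕ) (u : ℕ → ℝ) :
    ∑ j ∈ range k, (((k : ℝ) - j) * u j + (j + 1) * u (j + 1)) = k * ∑ j ∈ range (k + 1), u j := by
  induction k with
  | zero => simp
  | succ k ih =>
    have hshift : ∑ j ∈ range (k + 1), (((k + 1 : ℕ) : ℝ) - j) * u j =
        ∑ j ∈ range (k + 1), (((k : ℝ) - j) * u j + u j) :=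
      sum_congr rfl fun j _ => by push_cast; ring
    rw [sum_add_distrib] at ih
    rw [sum_add_distrib, hshift, sum_add_distrib, sum_range_succ (fun j => ((k : ℝ) - j) * u j),
      sum_range_succ (fun j : ℕ => ((j : ℝ) + 1) * u (j + 1)), sum_range_succ _ (k + 1)]
    push_cast
    linear_combination ih

theorem two_mul_mul_sum_sub_le_sum_sq {ι : Type*} (s : Finset ι) (f : ι → ℝ) (w : ℝ) :
    2 * w * ∑ i ∈ s, f i - #s * w ^ 2 ≤ ∑ i ∈ s, f i ^ 2 := by
  have h := sum_nonneg fun i (_ : i ∈ s) => sq_nonneg (f i - w)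
  simp only [sub_sq, sum_add_distrib, sum_sub_distrib, sum_const, nsmul_eq_mul, ← sum_mul,
    ← mul_sum] at h
  linarith

section AlternatingChain

variable {k : ℕ} {c : ℝ} {u v : ℕ → ℝ}

theorem mul_le_weighted_sum_of_chain (huv : ∀ j < k, c ≤ u j + v j)
    (hvu : ∀ j < k, c ≤ v j + u (j + 1)) :
    c * (k * (k + 1)) ≤ k * ∑ j ∈ range (k + 1), u j + (k + 1) * ∑ j ∈ range k, v j := by
  have hpair : ∀ j ∈ range k,
      (k + 1) * c ≤ ((k : ℝ) - j) * (u j + v j) + (j + 1) * (v j + u (j + 1)) := by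
    intro j hj
    rw [mem_range] at hj
    have hjk : (j : ℝ) + 1 ≤ k := by exact_mod_cast hj
    have h1 := mul_le_mul_of_nonneg_left (huv j hj) (by linarith : (0 : ℝ) ≤ k - j)
    have h2 := mul_le_mul_of_nonneg_left (hvu j hj) (by positivity : (0 : ℝ) ≤ j + 1)
    linarith
  have hregroup : ∀ j ∈ range k,
      ((k : ℝ) - j) * (u j + v j) + (j + 1) * (v j + u (j + 1)) =
        (((k : ℝ) - j) * u j + (j + 1) * u (j + 1)) + (k + 1) * v j :=
    fun j _ => by ring
  have hsum := sum_le_sum hpair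
  rw [sum_congr rfl hregroup, sum_add_distrib, sum_range_sub_mul_add_succ_mul, sum_const,
    card_range, nsmul_eq_mul, ← mul_sum] at hsum
  linarith

theorem sum_sq_ge_of_chain (hc : 0 ≤ c) (huv : ∀ j < k, c ≤ u j + v j)
    (hvu : ∀ j < k, c ≤ v j + u (j + 1)) :
    c ^ 2 * (k * (k + 1)) / (2 * k + 1) ≤ ∑ j ∈ range (k + 1), u j ^ 2 + ∑ j ∈ range k, v j ^ 2 := by
  set t := c / (2 * k + 1)
  have hu := two_mul_mul_sum_sub_le_sum_sq (range (k + 1)) u (t * k)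
  have hv := two_mul_mul_sum_sub_le_sum_sq (range k) v (t * (k + 1))
  have hw := mul_le_mul_of_nonneg_left (mul_le_weighted_sum_of_chain huv hvu)
    (by positivity : 0 ≤ 2 * t)
  simp only [card_range] at hu hv
  push_cast at hu hv
  have hbound : c ^ 2 * (k * (k + 1)) / (2 * k + 1) =
      2 * t * (c * (k * (k + 1))) - t ^ 2 * (k * (k + 1) * (2 * k + 1)) := by
    simp only [t]; field_simp; ring
  rw [hbound]
  linarith

end AlternatingChain

theorem xiTgt_two_mul (j : ℕ) : xiTgt (2 * j) = -(4 / 5) := by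
  simp [xiTgt]

theorem xiTgt_two_mul_add_one (j : ℕ) : xiTgt (2 * j + 1) = 4 / 5 := by
  simp [xiTgt]

theorem cost_two_mul (n : ℕ) (x : ℕ → ℝ) :
    cost (2 * n) x = (x 0 + 4 / 5) ^ 2 +
      ∑ j ∈ range n, ((4 / 5 - x (2 * j + 1)) ^ 2 + (x (2 * j + 2) + 4 / 5) ^ 2) := by
  rw [cost, sum_range_two_mul_add_one]
  refine congrArg₂ (· + ·) ?_ (sum_congr rfl fun j _ => ?_)
  · rw [← mul_zero 2, xiTgt_two_mul]; ring
  · rw [xiTgt_two_mul_add_one, show 2 * j + 2 = 2 * (j + 1) by ring, xiTgt_two_mul]; ring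

theorem stmt_4 (q : ℕ) (hq : 1 ≤ q) (ε : ℝ)
    (hε : ε ∈ Set.Ioc (2 / (5 * (2 * (q : ℝ) - 1))) (7 / 5)) :
    ∀ x : ℕ → ℝ, Feasible (2 * q) (-(2 / 5) + ε) x →
      8 * ((q : ℝ) + 2) / 25 + 8 * (q : ℝ) / (25 * (2 * (q : ℝ) - 1) ^ 2) ≤ cost (2 * q) x := by
  rintro x ⟨hx0, hxq, -, hstep⟩
  obtain ⟨k, rfl⟩ : ∃ k, q = k + 1 := ⟨q - 1, by omega⟩
  set u : ℕ → ℝ := fun j => 4 / 5 - x (2 * j + 1)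
  set v : ℕ → ℝ := fun j => x (2 * j + 2) + 4 / 5
  have hchain := sum_sq_ge_of_chain (c := 4 / 5) (k := k) (u := u) (v := v) (by norm_num)
    (fun j hj => by
      have := abs_le.mp (hstep (2 * j + 1) (by omega))
      simp only [u, v]; linarith)
    (fun j hj => by
      have := abs_le.mp (hstep (2 * j + 2) (by omega))
      simp only [u, v, show 2 * (j + 1) + 1 = 2 * j + 2 + 1 by ring]; linarith)
  have hlast : 2 / 5 + 2 / (5 * (2 * (k : ℝ) + 1)) ≤ v k := by
    have hε₁ := hε.1
    rw [Nat.cast_add_one, show 2 * ((k : ℝ) + 1) - 1 = 2 * k + 1 by ring] at hε₁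
    simp only [v, show 2 * k + 2 = 2 * (k + 1) by ring, hxq]
    linarith
  have hlast_sq := pow_le_pow_left₀ (by positivity) hlast 2
  rw [cost_two_mul, sum_add_distrib, sum_range_succ (fun j => v j ^ 2), hx0]
  calc _ = (0 + 4 / 5) ^ 2 + (4 / 5) ^ 2 * (k * (k + 1)) / (2 * k + 1) +
          (2 / 5 + 2 / (5 * (2 * (k : ℝ) + 1))) ^ 2 := by
        push_cast
        rw [show 2 * ((k : ℝ) + 1) - 1 = 2 * k + 1 by ring]
        field_simp
        ring
    _ ≤ _ := by linarith
end

section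
/- Let q ≥ 1 be an integer and ε ∈ [−3/5, 0). Then every trajectory feasible for (2q, −2/5 + ε) has cost at least 8(q+2)/25. -/
lemma pair_bound (a b : ℝ) (h : |b - a| ≤ 4 / 5) :
    8 / 25 ≤ (a - 4 / 5) ^ 2 + (b + 4 / 5) ^ 2 := by
  have h' := (abs_le.mp h).1
  nlinarith [sq_nonneg (a + b), sq_nonneg (b - a + 8 / 5)]

lemma aux_bound (x : ℕ → ℝ) (h0 : x 0 = 0) :
    ∀ q : ℕ, (∀ t < 2 * q, |x (t + 1) - x t| ≤ 4 / 5) →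
      16 / 25 + 8 * (q : ℝ) / 25 ≤ cost (2 * q) x := by
  intro q
  induction q with
  | zero => intro _; simp [cost, xiTgt, h0]; norm_num
  | succ q ih =>
    intro hstep
    have hq := ih (fun t ht => hstep t (by omega))
    have h1 : xiTgt (2 * q + 1) = 4 / 5 := by
      rw [xiTgt, if_pos ⟨q, by ring⟩]
    have h2 : xiTgt (2 * q + 1 + 1) = -(4 / 5) := by
      rw [xiTgt, if_neg]
      simp [Nat.odd_iff, Nat.add_mod, Nat.mul_mod_right]
    have key : 8 / 25 ≤ (x (2 * q + 1) - xiTgt (2 * q + 1)) ^ 2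
        + (x (2 * q + 1 + 1) - xiTgt (2 * q + 1 + 1)) ^ 2 := by
      rw [h1, h2]
      have := pair_bound (x (2 * q + 1)) (x (2 * q + 1 + 1))
        (hstep (2 * q + 1) (by omega))
      linarith [this]
    have hc : cost (2 * (q + 1)) x = cost (2 * q) x
        + (x (2 * q + 1) - xiTgt (2 * q + 1)) ^ 2
        + (x (2 * q + 1 + 1) - xiTgt (2 * q + 1 + 1)) ^ 2 := by
      simp only [cost]
      have h3 : 2 * (q + 1) + 1 = (2 * q + 1) + 1 + 1 := by ring
      rw [h3, Finset.sum_range_succ, Finset.sum_range_succ]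
    rw [hc]
    push_cast
    linarith

theorem stmt_5 (q : ℕ) (hq : 1 ≤ q) (ε : ℝ)
    (hε : ε ∈ Set.Ico (-(3 / 5) : ℝ) 0) :
    ∀ x : ℕ → ℝ, Feasible (2 * q) (-(2 / 5) + ε) x →
      8 * ((q : ℝ) + 2) / 25 ≤ cost (2 * q) x := by
  intro x ⟨h0, _, _, hstep⟩
  have := aux_bound x h0 q hstep
  linarith
end

section
/- Let m, d ≥ 1 and let A, B ∈ ℝ^{(md)×(md)} be invertible matrices. Let C > 0 and λ ∈ (0,1), and suppose ‖(A^{-1})[i][j]‖ ≤ C λ^{|i−j|} and ‖(B^{-1})[i][j]‖ ≤ C λ^{|i−j|} for all block indices i, j ∈ {1,…,m}. Suppose E := A − B is block-tridiagonal, i.e., E[i][j] = 0 whenever |i−j| > 1. Then for all i, j ∈ {1,…,m}: ‖(A^{-1} − B^{-1})[i][j]‖ ≤ C² Σ_{τ=1}^{m} λ^{|τ−i|+|τ−j|} ( ‖E[τ][τ]‖ + (1/λ)( ‖E[τ+1][τ]‖ + ‖E[τ][τ+1]‖ ) ), where the terms involving τ+1 are omitted when τ = m. -/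
/-- The `(i, j)` block of an `(m*d) × (m*d)` matrix viewed as an `m × m` grid of
`d × d` blocks. -/
def blk {m d : ℕ} (A : Matrix (Fin m × Fin d) (Fin m × Fin d) ℝ) (i j : Fin m) :
    Matrix (Fin d) (Fin d) ℝ :=
  Matrix.of fun a b => A (i, a) (j, b)

/-- The spectral (ℓ₂ operator) norm of a real `d × d` matrix. -/
noncomputable def specNorm {d : ℕ} (B : Matrix (Fin d) (Fin d) ℝ) : ℝ :=
  ‖LinearMap.toContinuousLinearMap (Matrix.toEuclideanLin B)‖

attribute [local instance] Matrix.instL2OpMetricSpace Matrix.instL2OpNormedAddCommGroup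

lemma specNorm_eq_norm {d : ℕ} (B : Matrix (Fin d) (Fin d) ℝ) : specNorm B = ‖B‖ := rfl

lemma blk_mul {m d : ℕ} (X Y : Matrix (Fin m × Fin d) (Fin m × Fin d) ℝ) (i j : Fin m) :
    blk (X * Y) i j = ∑ τ : Fin m, blk X i τ * blk Y τ j := by
  ext a b
  simp [blk, Matrix.mul_apply, Matrix.sum_apply, Fintype.sum_prod_type]

lemma l2norm_triple {d : ℕ} (X Y Z : Matrix (Fin d) (Fin d) ℝ) :
    ‖X * (Y * Z)‖ ≤ ‖X‖ * (‖Y‖ * ‖Z‖) :=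
  (Matrix.l2_opNorm_mul X (Y*Z)).trans (mul_le_mul_of_nonneg_left (Matrix.l2_opNorm_mul Y Z) (norm_nonneg X))

lemma triple_bound {d : ℕ} {X Y Z : Matrix (Fin d) (Fin d) ℝ} {x z : ℝ}
    (hx : ‖X‖ ≤ x) (hz : ‖Z‖ ≤ z) (hx0 : 0 ≤ x) :
    ‖X * (Y * Z)‖ ≤ x * (‖Y‖ * z) :=
  (l2norm_triple X Y Z).trans
    (mul_le_mul hx (mul_le_mul_of_nonneg_left hz (norm_nonneg Y)) (by positivity) hx0)

lemma sum_ite_val {m : ℕ} (k : ℕ) (f : Fin m → ℝ) :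
    (∑ σ : Fin m, if (σ : ℕ) = k then f σ else 0) = if h : k < m then f ⟨k, h⟩ else 0 := by
  split
  · next h =>
    calc (∑ σ : Fin m, if (σ : ℕ) = k then f σ else 0)
        = ∑ σ : Fin m, if σ = (⟨k, h⟩ : Fin m) then f σ else 0 := by
          refine Finset.sum_congr rfl fun σ _ => ?_
          congr 1
          simp [Fin.ext_iff]
      _ = f ⟨k, h⟩ := by simp
  · next h =>
    refine Finset.sum_eq_zero fun σ _ => ?_
    rw [if_neg]
    intro hσ
    exact h (hσ ▸ σ.isLt)

theorem stmt_10 (m d : ℕ) (hm : 1 ≤ m) (hd : 1 ≤ d)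
    (A B : Matrix (Fin m × Fin d) (Fin m × Fin d) ℝ)
    (hA : IsUnit A) (hB : IsUnit B)
    (C lam : ℝ) (hC : 0 < C) (hlam : lam ∈ Set.Ioo (0 : ℝ) 1)
    (hAinv : ∀ i j : Fin m, specNorm (blk A⁻¹ i j) ≤ C * lam ^ (Nat.dist i j))
    (hBinv : ∀ i j : Fin m, specNorm (blk B⁻¹ i j) ≤ C * lam ^ (Nat.dist i j))
    (hE : ∀ i j : Fin m, 1 < Nat.dist i j → blk (A - B) i j = 0) :
    ∀ i j : Fin m,
      specNorm (blk (A⁻¹ - B⁻¹) i j) ≤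
        C ^ 2 * ∑ τ : Fin m, lam ^ (Nat.dist τ i + Nat.dist τ j) *
          (specNorm (blk (A - B) τ τ) +
            (1 / lam) *
              (if h : (τ : ℕ) + 1 < m then
                specNorm (blk (A - B) ⟨(τ : ℕ) + 1, h⟩ τ) +
                  specNorm (blk (A - B) τ ⟨(τ : ℕ) + 1, h⟩)
              else 0)) := by
  intro i j
  obtain ⟨hlam0, hlam1⟩ := hlam
  simp only [specNorm_eq_norm] at hAinv hBinv ⊢
  have hlamne : lam ≠ 0 := ne_of_gt hlam0
  have hAdet : IsUnit A.det := (Matrix.isUnit_iff_isUnit_det A).mp hA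
  have hBdet : IsUnit B.det := (Matrix.isUnit_iff_isUnit_det B).mp hB
  have key : A⁻¹ * ((B - A) * B⁻¹) = A⁻¹ - B⁻¹ := by
    rw [Matrix.sub_mul, Matrix.mul_nonsing_inv _ hBdet, Matrix.mul_sub, Matrix.mul_one,
      ← Matrix.mul_assoc, Matrix.nonsing_inv_mul _ hAdet, Matrix.one_mul]
  have hblk : blk (A⁻¹ - B⁻¹) i j
      = ∑ σ : Fin m, ∑ τ : Fin m, blk A⁻¹ i σ * (blk (B - A) σ τ * blk B⁻¹ τ j) := by
    rw [← key, blk_mul]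
    refine Finset.sum_congr rfl fun σ _ => ?_
    rw [blk_mul, Finset.mul_sum]
  have hBA : ∀ σ τ : Fin m, blk (B - A) σ τ = -(blk (A - B) σ τ) := by
    intro σ τ
    ext a b
    simp [blk, Matrix.sub_apply, Matrix.neg_apply]
  -- the three bucket functions
  obtain ⟨Aa, hAa⟩ : ∃ Aa : Fin m → ℝ, ∀ τ : Fin m, Aa τ =
      C ^ 2 * (lam ^ (Nat.dist (τ:ℕ) (i:ℕ) + Nat.dist (τ:ℕ) (j:ℕ)) * ‖blk (A - B) τ τ‖) :=
    ⟨_, fun τ => rfl⟩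
  obtain ⟨Bb, hBb⟩ : ∃ Bb : Fin m → ℝ, ∀ τ : Fin m, Bb τ =
      if h : (τ:ℕ) + 1 < m then
        C ^ 2 * (lam ^ (Nat.dist (τ:ℕ) (i:ℕ) + Nat.dist (τ:ℕ) (j:ℕ)) *
          ((1/lam) * ‖blk (A - B) ⟨(τ:ℕ)+1, h⟩ τ‖)) else 0 :=
    ⟨_, fun τ => rfl⟩
  obtain ⟨Cc, hCc⟩ : ∃ Cc : Fin m → ℝ, ∀ τ : Fin m, Cc τ =
      if h : (τ:ℕ) + 1 < m then
        C ^ 2 * (lam ^ (Nat.dist (τ:ℕ) (i:ℕ) + Nat.dist (τ:ℕ) (j:ℕ)) *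
          ((1/lam) * ‖blk (A - B) τ ⟨(τ:ℕ)+1, h⟩‖)) else 0 :=
    ⟨_, fun τ => rfl⟩
  have hAa0 : ∀ τ, 0 ≤ Aa τ := by
    intro τ; rw [hAa]; positivity
  have hBb0 : ∀ τ, 0 ≤ Bb τ := by
    intro τ; rw [hBb]; split
    · positivity
    · exact le_rfl
  have hCc0 : ∀ τ, 0 ≤ Cc τ := by
    intro τ; rw [hCc]; split
    · positivity
    · exact le_rfl
  -- power comparison helper
  have hpow : ∀ a b e : ℕ, e ≤ a + b + 1 →
      lam ^ a * lam ^ b ≤ lam ^ e * (1/lam) := by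
    intro a b e he
    have h1 : lam ^ (a + b + 1) ≤ lam ^ e :=
      pow_le_pow_of_le_one hlam0.le hlam1.le he
    calc lam ^ a * lam ^ b = lam ^ (a + b + 1) * (1/lam) := by
          rw [pow_succ, ← pow_add]; field_simp
      _ ≤ lam ^ e * (1/lam) := mul_le_mul_of_nonneg_right h1 (by positivity)
  -- termwise bound
  have hterm : ∀ σ τ : Fin m,
      ‖blk A⁻¹ i σ * (blk (B - A) σ τ * blk B⁻¹ τ j)‖ ≤
        (if σ = τ then Aa τ else 0) + (if (σ:ℕ) = (τ:ℕ)+1 then Bb τ else 0)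
          + (if (τ:ℕ) = (σ:ℕ)+1 then Cc σ else 0) := by
    intro σ τ
    have hC2 : (0:ℝ) ≤ C * lam ^ (Nat.dist (i:ℕ) (σ:ℕ)) :=
      mul_nonneg hC.le (pow_nonneg hlam0.le _)
    have htri : ‖blk A⁻¹ i σ * (blk (B - A) σ τ * blk B⁻¹ τ j)‖ ≤
        (C * lam ^ (Nat.dist (i:ℕ) (σ:ℕ))) *
          (‖blk (A - B) σ τ‖ * (C * lam ^ (Nat.dist (τ:ℕ) (j:ℕ)))) := by
      have hnn : ‖blk (B - A) σ τ‖ = ‖blk (A - B) σ τ‖ := by rw [hBA, norm_neg]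
      have := triple_bound (Y := blk (B - A) σ τ) (hAinv i σ) (hBinv τ j) hC2
      rwa [hnn] at this
    by_cases h1 : σ = τ
    · subst h1
      rw [if_pos rfl, if_neg (by omega), if_neg (by omega), add_zero, add_zero]
      refine htri.trans (le_of_eq ?_)
      rw [hAa, Nat.dist_comm (σ:ℕ) (i:ℕ), pow_add]
      ring
    · by_cases h2 : (σ:ℕ) = (τ:ℕ)+1
      · rw [if_neg h1, if_pos h2, if_neg (show ¬(τ:ℕ) = (σ:ℕ)+1 by omega), zero_add, add_zero]
        have hm' : (τ:ℕ)+1 < m := h2 ▸ σ.isLt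
        have hσ : σ = ⟨(τ:ℕ)+1, hm'⟩ := Fin.ext h2
        rw [hBb, dif_pos hm', ← hσ]
        refine htri.trans ?_
        have hd : Nat.dist (τ:ℕ) (i:ℕ) + Nat.dist (τ:ℕ) (j:ℕ) ≤
            Nat.dist (i:ℕ) (σ:ℕ) + Nat.dist (τ:ℕ) (j:ℕ) + 1 := by
          simp only [Nat.dist]; omega
        calc (C * lam ^ (Nat.dist (i:ℕ) (σ:ℕ))) *
              (‖blk (A - B) σ τ‖ * (C * lam ^ (Nat.dist (τ:ℕ) (j:ℕ))))
            = (C ^ 2 * ‖blk (A - B) σ τ‖) *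
                (lam ^ (Nat.dist (i:ℕ) (σ:ℕ)) * lam ^ (Nat.dist (τ:ℕ) (j:ℕ))) := by ring
          _ ≤ (C ^ 2 * ‖blk (A - B) σ τ‖) *
                (lam ^ (Nat.dist (τ:ℕ) (i:ℕ) + Nat.dist (τ:ℕ) (j:ℕ)) * (1/lam)) :=
              mul_le_mul_of_nonneg_left (hpow _ _ _ hd) (by positivity)
          _ = C ^ 2 * (lam ^ (Nat.dist (τ:ℕ) (i:ℕ) + Nat.dist (τ:ℕ) (j:ℕ)) *
                ((1/lam) * ‖blk (A - B) σ τ‖)) := by ring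
      · by_cases h3 : (τ:ℕ) = (σ:ℕ)+1
        · rw [if_neg h1, if_neg h2, if_pos h3, zero_add, zero_add]
          have hm' : (σ:ℕ)+1 < m := h3 ▸ τ.isLt
          have hτ : τ = ⟨(σ:ℕ)+1, hm'⟩ := Fin.ext h3
          rw [hCc, dif_pos hm', ← hτ]
          refine htri.trans ?_
          have hd : Nat.dist (σ:ℕ) (i:ℕ) + Nat.dist (σ:ℕ) (j:ℕ) ≤
              Nat.dist (i:ℕ) (σ:ℕ) + Nat.dist (τ:ℕ) (j:ℕ) + 1 := by
            simp only [Nat.dist]; omega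
          calc (C * lam ^ (Nat.dist (i:ℕ) (σ:ℕ))) *
                (‖blk (A - B) σ τ‖ * (C * lam ^ (Nat.dist (τ:ℕ) (j:ℕ))))
              = (C ^ 2 * ‖blk (A - B) σ τ‖) *
                  (lam ^ (Nat.dist (i:ℕ) (σ:ℕ)) * lam ^ (Nat.dist (τ:ℕ) (j:ℕ))) := by ring
            _ ≤ (C ^ 2 * ‖blk (A - B) σ τ‖) *
                  (lam ^ (Nat.dist (σ:ℕ) (i:ℕ) + Nat.dist (σ:ℕ) (j:ℕ)) * (1/lam)) :=
                mul_le_mul_of_nonneg_left (hpow _ _ _ hd) (by positivity)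
            _ = C ^ 2 * (lam ^ (Nat.dist (σ:ℕ) (i:ℕ) + Nat.dist (σ:ℕ) (j:ℕ)) *
                  ((1/lam) * ‖blk (A - B) σ τ‖)) := by ring
        · -- far off-diagonal: the block of A - B vanishes
          have h1' : (σ:ℕ) ≠ (τ:ℕ) := fun e => h1 (Fin.ext e)
          have hdist : 1 < Nat.dist (σ:ℕ) (τ:ℕ) := by
            simp only [Nat.dist]; omega
          have hz : blk (B - A) σ τ = 0 := by
            rw [hBA, hE σ τ hdist, neg_zero]
          rw [hz, Matrix.zero_mul, Matrix.mul_zero, norm_zero]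
          have e1 : (0:ℝ) ≤ if σ = τ then Aa τ else 0 := by
            split
            · exact hAa0 τ
            · exact le_rfl
          have e2 : (0:ℝ) ≤ if (σ:ℕ) = (τ:ℕ)+1 then Bb τ else 0 := by
            split
            · exact hBb0 τ
            · exact le_rfl
          have e3 : (0:ℝ) ≤ if (τ:ℕ) = (σ:ℕ)+1 then Cc σ else 0 := by
            split
            · exact hCc0 σ
            · exact le_rfl
          exact add_nonneg (add_nonneg e1 e2) e3
  calc ‖blk (A⁻¹ - B⁻¹) i j‖
      ≤ ∑ σ : Fin m, ∑ τ : Fin m, ‖blk A⁻¹ i σ * (blk (B - A) σ τ * blk B⁻¹ τ j)‖ := by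
        rw [hblk]
        exact (norm_sum_le _ _).trans (Finset.sum_le_sum fun σ _ => norm_sum_le _ _)
    _ ≤ ∑ σ : Fin m, ∑ τ : Fin m, ((if σ = τ then Aa τ else 0)
          + (if (σ:ℕ) = (τ:ℕ)+1 then Bb τ else 0) + (if (τ:ℕ) = (σ:ℕ)+1 then Cc σ else 0)) :=
        Finset.sum_le_sum fun σ _ => Finset.sum_le_sum fun τ _ => hterm σ τ
    _ = (∑ σ : Fin m, Aa σ) + (∑ τ : Fin m, Bb τ) + (∑ σ : Fin m, Cc σ) := by
        simp only [Finset.sum_add_distrib]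
        congr 1
        congr 1
        · refine Finset.sum_congr rfl fun σ _ => ?_
          simp [Finset.sum_ite_eq]
        · rw [Finset.sum_comm]
          refine Finset.sum_congr rfl fun τ _ => ?_
          rw [sum_ite_val ((τ:ℕ)+1) (fun _ => Bb τ)]
          split
          · rfl
          · next h => rw [hBb, dif_neg h]
        · refine Finset.sum_congr rfl fun σ _ => ?_
          rw [sum_ite_val ((σ:ℕ)+1) (fun _ => Cc σ)]
          split
          · rfl
          · next h => rw [hCc, dif_neg h]
    _ = C ^ 2 * ∑ τ : Fin m, lam ^ (Nat.dist (τ:ℕ) (i:ℕ) + Nat.dist (τ:ℕ) (j:ℕ)) *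
          (‖blk (A - B) τ τ‖ +
            (1 / lam) *
              (if h : (τ : ℕ) + 1 < m then
                ‖blk (A - B) ⟨(τ : ℕ) + 1, h⟩ τ‖ + ‖blk (A - B) τ ⟨(τ : ℕ) + 1, h⟩‖
              else 0)) := by
        rw [Finset.mul_sum, ← Finset.sum_add_distrib, ← Finset.sum_add_distrib]
        refine Finset.sum_congr rfl fun τ _ => ?_
        rw [hAa τ, hBb τ, hCc τ]
        by_cases h : (τ:ℕ)+1 < m
        · rw [dif_pos h, dif_pos h, dif_pos h]; ring
        · rw [dif_neg h, dif_neg h, dif_neg h]; ring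
end

section
/- Let T ≥ 1 be an integer, let e_0,…,e_{T−1} ≥ 0 be reals, let q : ℕ → ℝ satisfy q(i) ≥ 0 for all i, q(0) ≥ 1, and Σ_{i=0}^{T−1} q(i) ≤ C for a constant C ≥ 1, and let L > 0. Let a_1,…,a_T ≥ 0 and b_0,…,b_{T−1} ≥ 0 be reals satisfying a_t ≤ L Σ_{i=0}^{t−1} q(i) e_{t−1−i} for every 1 ≤ t ≤ T, and b_t ≤ e_t + L Σ_{i=0}^{t−1} q(i) e_{t−1−i} for every 0 ≤ t ≤ T−1. Then Σ_{t=1}^{T} a_t² + Σ_{t=0}^{T−1} b_t² ≤ (1 + 2CL²)(1 + C) Σ_{t=0}^{T−1} e_t². -/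
theorem stmt_12 (T : ℕ) (hT : 1 ≤ T) (C L : ℝ) (hC : 1 ≤ C) (hL : 0 < L)
    (e : ℕ → ℝ) (he : ∀ t < T, 0 ≤ e t)
    (q : ℕ → ℝ) (hq : ∀ i, 0 ≤ q i) (hq0 : 1 ≤ q 0)
    (hqC : ∑ i ∈ Finset.range T, q i ≤ C)
    (a b : ℕ → ℝ)
    (ha0 : ∀ t, 1 ≤ t → t ≤ T → 0 ≤ a t)
    (hb0 : ∀ t < T, 0 ≤ b t)
    (ha : ∀ t, 1 ≤ t → t ≤ T → a t ≤ L * ∑ i ∈ Finset.range t, q i * e (t - 1 - i))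
    (hb : ∀ t < T, b t ≤ e t + L * ∑ i ∈ Finset.range t, q i * e (t - 1 - i)) :
    ∑ t ∈ Finset.Icc 1 T, a t ^ 2 + ∑ t ∈ Finset.range T, b t ^ 2 ≤
      (1 + 2 * C * L ^ 2) * (1 + C) * ∑ t ∈ Finset.range T, e t ^ 2 := by
  set E := ∑ t ∈ Finset.range T, e t ^ 2 with hE
  have hE0 : 0 ≤ E := Finset.sum_nonneg fun i _ => sq_nonneg _
  set S : ℕ → ℝ := fun t => ∑ i ∈ Finset.range t, q i * e (t - 1 - i) with hSdef
  set Q : ℕ → ℝ := fun t => ∑ i ∈ Finset.range t, q i * e (t - 1 - i) ^ 2 with hQdef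
  have hQ0 : ∀ t, 0 ≤ Q t :=
    fun t => Finset.sum_nonneg fun i _ => mul_nonneg (hq i) (sq_nonneg _)
  have hC0 : (0:ℝ) < C := lt_of_lt_of_le one_pos hC
  have hqpart : ∀ t ≤ T, ∑ i ∈ Finset.range t, q i ≤ C := by
    intro t ht
    calc ∑ i ∈ Finset.range t, q i ≤ ∑ i ∈ Finset.range T, q i :=
          Finset.sum_le_sum_of_subset_of_nonneg (Finset.range_subset_range.mpr ht)
            (fun i _ _ => hq i)
      _ ≤ C := hqC
  -- Cauchy–Schwarz
  have hCS : ∀ t ≤ T, S t ^ 2 ≤ C * Q t := by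
    intro t ht
    have h1 : S t ^ 2 ≤ (∑ i ∈ Finset.range t, q i) * Q t := by
      apply Finset.sum_sq_le_sum_mul_sum_of_sq_eq_mul
      · intro i _; exact hq i
      · intro i _; exact mul_nonneg (hq i) (sq_nonneg _)
      · intro i _; ring
    calc S t ^ 2 ≤ (∑ i ∈ Finset.range t, q i) * Q t := h1
      _ ≤ C * Q t := mul_le_mul_of_nonneg_right (hqpart t ht) (hQ0 t)
  have hS0 : ∀ t ≤ T, 0 ≤ S t := by
    intro t ht
    apply Finset.sum_nonneg
    intro i hi
    have hi' := Finset.mem_range.mp hi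
    exact mul_nonneg (hq i) (he _ (by omega))
  -- per-term bound for a
  have hA : ∀ t ∈ Finset.Icc 1 T, a t ^ 2 ≤ C * L ^ 2 * Q t := by
    intro t ht
    obtain ⟨h1, h2⟩ := Finset.mem_Icc.mp ht
    have haS : a t ≤ L * S t := ha t h1 h2
    have h3 : a t ^ 2 ≤ (L * S t) ^ 2 :=
      pow_le_pow_left₀ (ha0 t h1 h2) haS 2
    have h4 : (L * S t) ^ 2 = L ^ 2 * S t ^ 2 := by ring
    have h5 := mul_le_mul_of_nonneg_left (hCS t h2) (sq_nonneg L)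
    nlinarith [h3, h5]
  -- per-term bound for b
  have hB : ∀ t < T, b t ^ 2 ≤ (1 + C * L ^ 2) * (e t ^ 2 + Q t) := by
    intro t ht
    have hbt : b t ≤ e t + L * S t := hb t ht
    have hSt0 : 0 ≤ S t := hS0 t ht.le
    have het0 : 0 ≤ e t := he t ht
    have h3 : b t ^ 2 ≤ (e t + L * S t) ^ 2 :=
      pow_le_pow_left₀ (hb0 t ht) hbt 2
    have hcs := hCS t ht.le
    nlinarith [sq_nonneg (C * L * e t - S t), hQ0 t, sq_nonneg L,
      mul_le_mul_of_nonneg_left hcs (mul_nonneg hC0.le (sq_nonneg L)),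
      mul_le_mul_of_nonneg_left hcs (sq_nonneg L),
      mul_nonneg (mul_nonneg hC0.le hL.le) (mul_nonneg het0 hSt0)]
  -- key sum bound : ∑_{t ≤ T} Q t ≤ C * E
  have keysum : ∑ t ∈ Finset.range (T+1), Q t ≤ C * E := by
    have step1 : ∀ t, Q t = ∑ j ∈ Finset.range t, q (t - 1 - j) * e j ^ 2 := by
      intro t
      rw [← Finset.sum_range_reflect (fun j => q (t - 1 - j) * e j ^ 2) t]
      apply Finset.sum_congr rfl
      intro i hi
      have hi' := Finset.mem_range.mp hi
      have h1 : t - 1 - (t - 1 - i) = i := by omega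
      simp only [h1]
    have step2 : ∑ t ∈ Finset.range (T+1), Q t =
        ∑ j ∈ Finset.range (T+1), ∑ t ∈ Finset.range (T+1),
          (if j < t then q (t - 1 - j) else 0) * e j ^ 2 := by
      rw [← Finset.sum_comm]
      apply Finset.sum_congr rfl
      intro t ht
      rw [step1]
      have ht' := Finset.mem_range.mp ht
      symm
      calc ∑ y ∈ Finset.range (T+1), (if y < t then q (t - 1 - y) else 0) * e y ^ 2
          = ∑ y ∈ Finset.range (T+1), (if y < t then q (t - 1 - y) * e y ^ 2 else 0) := by
            apply Finset.sum_congr rfl; intro y _; split <;> simp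
        _ = ∑ y ∈ (Finset.range (T+1)).filter (fun y => y < t), q (t - 1 - y) * e y ^ 2 :=
            (Finset.sum_filter _ _).symm
        _ = ∑ j ∈ Finset.range t, q (t - 1 - j) * e j ^ 2 := by
            apply Finset.sum_congr _ (fun _ _ => rfl)
            ext y
            simp only [Finset.mem_filter, Finset.mem_range]
            omega
    rw [step2]
    have coeff : ∀ j ∈ Finset.range (T+1),
        ∑ t ∈ Finset.range (T+1), (if j < t then q (t - 1 - j) else 0) * e j ^ 2
          = (∑ k ∈ Finset.range (T - j), q k) * e j ^ 2 := by
      intro j hj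
      rw [← Finset.sum_mul]
      congr 1
      have hfil : (Finset.range (T+1)).filter (fun t => j < t) = Finset.Ico (j+1) (T+1) := by
        ext t
        simp only [Finset.mem_filter, Finset.mem_range, Finset.mem_Ico]
        omega
      calc ∑ t ∈ Finset.range (T+1), (if j < t then q (t - 1 - j) else 0)
          = ∑ t ∈ (Finset.range (T+1)).filter (fun t => j < t), q (t - 1 - j) :=
            (Finset.sum_filter _ _).symm
        _ = ∑ t ∈ Finset.Ico (j+1) (T+1), q (t - 1 - j) := by rw [hfil]
        _ = ∑ k ∈ Finset.range (T + 1 - (j + 1)), q (j + 1 + k - 1 - j) :=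
            Finset.sum_Ico_eq_sum_range _ _ _
        _ = ∑ k ∈ Finset.range (T - j), q k := by
            apply Finset.sum_congr (by congr 1; omega)
            intro k hk
            congr 1
            omega
    rw [Finset.sum_congr rfl coeff]
    rw [Finset.sum_range_succ]
    have hlast : (∑ k ∈ Finset.range (T - T), q k) * e T ^ 2 = 0 := by
      simp
    rw [hlast, add_zero]
    calc ∑ j ∈ Finset.range T, (∑ k ∈ Finset.range (T - j), q k) * e j ^ 2
        ≤ ∑ j ∈ Finset.range T, C * e j ^ 2 := by
          apply Finset.sum_le_sum
          intro j hj
          apply mul_le_mul_of_nonneg_right _ (sq_nonneg _)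
          exact hqpart _ (by omega)
      _ = C * E := by rw [← Finset.mul_sum]
  -- sums over the two index sets
  have hsubA : Finset.Icc 1 T ⊆ Finset.range (T+1) := by
    intro t ht
    simp only [Finset.mem_Icc] at ht
    simp only [Finset.mem_range]
    omega
  have hsubB : Finset.range T ⊆ Finset.range (T+1) := Finset.range_subset_range.mpr (by omega)
  have hQA : ∑ t ∈ Finset.Icc 1 T, Q t ≤ C * E :=
    le_trans (Finset.sum_le_sum_of_subset_of_nonneg hsubA (fun t _ _ => hQ0 t)) keysum
  have hQB : ∑ t ∈ Finset.range T, Q t ≤ C * E :=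
    le_trans (Finset.sum_le_sum_of_subset_of_nonneg hsubB (fun t _ _ => hQ0 t)) keysum
  have sumA : ∑ t ∈ Finset.Icc 1 T, a t ^ 2 ≤ C * L ^ 2 * (C * E) := by
    calc ∑ t ∈ Finset.Icc 1 T, a t ^ 2 ≤ ∑ t ∈ Finset.Icc 1 T, C * L ^ 2 * Q t :=
          Finset.sum_le_sum hA
      _ = C * L ^ 2 * ∑ t ∈ Finset.Icc 1 T, Q t := by rw [← Finset.mul_sum]
      _ ≤ C * L ^ 2 * (C * E) := by
          apply mul_le_mul_of_nonneg_left hQA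
          positivity
  have sumB : ∑ t ∈ Finset.range T, b t ^ 2 ≤ (1 + C * L ^ 2) * (E + C * E) := by
    calc ∑ t ∈ Finset.range T, b t ^ 2
        ≤ ∑ t ∈ Finset.range T, (1 + C * L ^ 2) * (e t ^ 2 + Q t) := by
          apply Finset.sum_le_sum
          intro t ht
          exact hB t (Finset.mem_range.mp ht)
      _ = (1 + C * L ^ 2) * (E + ∑ t ∈ Finset.range T, Q t) := by
          rw [← Finset.mul_sum, Finset.sum_add_distrib]
      _ ≤ (1 + C * L ^ 2) * (E + C * E) := by
          apply mul_le_mul_of_nonneg_left _ (by positivity)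
          linarith
  nlinarith [mul_nonneg (mul_nonneg hC0.le (sq_nonneg L)) hE0, sumA, sumB]
end

section
/- Let n ≥ 1 be an integer, δ > 0, and 0 < m_lo ≤ m_hi be real numbers. Let L, D ∈ ℝ^{n×n} be arbitrary real matrices. For a real m > 0 define the 2n×2n matrix Â(m) := [[0, I_n], [−(1/m)L, −(1/m)D]] (in 2×2 block form), A(m) := I_{2n} + δÂ(m), and the 2n×n matrix B(m) := δ·[[0],[(1/m)I_n]] (the column block stack of the n×n zero matrix over (1/m)I_n). Then for all m₁, m₂ ∈ [m_lo, m_hi], the 2n×2n matrix [B(m₂), A(m₂)B(m₁)], whose first n columns are B(m₂) and last n columns are A(m₂)B(m₁), satisfies |det [B(m₂), A(m₂)B(m₁)]| = δ^{3n} / (m₁ m₂)^n ≥ δ^{3n} / m_hi^{2n}. -/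
/-- `Â(m) = [[0, Iₙ], [-(1/m)L, -(1/m)D]]` in `2 × 2` block form. -/
noncomputable def hatA (n : ℕ) (L D : Matrix (Fin n) (Fin n) ℝ) (m : ℝ) :
    Matrix (Fin n ⊕ Fin n) (Fin n ⊕ Fin n) ℝ :=
  Matrix.fromBlocks 0 1 (-(1 / m) • L) (-(1 / m) • D)

/-- `A(m) = I_{2n} + δ Â(m)`. -/
noncomputable def Amat (n : ℕ) (L D : Matrix (Fin n) (Fin n) ℝ) (δ m : ℝ) :
    Matrix (Fin n ⊕ Fin n) (Fin n ⊕ Fin n) ℝ :=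
  1 + δ • hatA n L D m

/-- `B(m) = δ · [[0], [(1/m) Iₙ]]`, the `2n × n` column block stack of the zero matrix
over `(1/m) Iₙ`, scaled by `δ`. -/
noncomputable def Bmat (n : ℕ) (δ m : ℝ) : Matrix (Fin n ⊕ Fin n) (Fin n) ℝ :=
  Matrix.of fun i j =>
    match i with
    | Sum.inl _ => 0
    | Sum.inr i' => δ * (if i' = j then 1 / m else 0)

/-! The determinant is computed blockwise: `[B(m₂), A(m₂)B(m₁)]` has a zero upper-left block and
scalar off-diagonal blocks `δ²/m₁ · Iₙ` and `δ/m₂ · Iₙ`, so swapping its two column blocks makes it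
block lower triangular. -/

open Matrix

theorem Matrix.abs_det_fromBlocks_zero₁₁ {n R : Type*} [Fintype n] [DecidableEq n] [CommRing R]
    [LinearOrder R] [IsStrictOrderedRing R] (B C D : Matrix n n R) :
    |(fromBlocks 0 B C D).det| = |B.det| * |C.det| := by
  rw [← abs_det_submatrix_equiv_equiv (Equiv.refl _) (Equiv.sumComm n n),
    Equiv.coe_refl, Equiv.sumComm_apply, fromBlocks_submatrix_sum_swap_right, submatrix_id_id,
    det_fromBlocks_zero₁₂, abs_mul]

lemma Bmat_eq_fromRows (n : ℕ) (δ m : ℝ) :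
    Bmat n δ m = fromRows 0 ((δ / m) • (1 : Matrix (Fin n) (Fin n) ℝ)) := by
  ext (i | i) j <;> simp [Bmat, one_apply, mul_ite, div_eq_mul_inv]

lemma Amat_eq_fromBlocks (n : ℕ) (L D : Matrix (Fin n) (Fin n) ℝ) (δ m : ℝ) :
    Amat n L D δ m = fromBlocks 1 (δ • 1) (-(δ / m) • L) (1 - (δ / m) • D) := by
  rw [Amat, hatA, fromBlocks_smul, ← fromBlocks_one, fromBlocks_add]
  congr 1 <;> simp [smul_smul, div_eq_mul_inv, sub_eq_add_neg]

lemma Amat_mul_Bmat (n : ℕ) (L D : Matrix (Fin n) (Fin n) ℝ) (δ m₁ m₂ : ℝ) :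
    Amat n L D δ m₂ * Bmat n δ m₁ =
      fromRows ((δ * (δ / m₁)) • 1) ((δ / m₁) • (1 - (δ / m₂) • D)) := by
  rw [Amat_eq_fromBlocks, Bmat_eq_fromRows, fromBlocks_mul_fromRows]
  congr 1 <;> simp [smul_smul, mul_comm]

lemma abs_det_fromCols_Bmat_Amat_mul_Bmat (n : ℕ) (L D : Matrix (Fin n) (Fin n) ℝ)
    {δ m₁ m₂ : ℝ} (hδ : 0 < δ) (hm₁ : 0 < m₁) (hm₂ : 0 < m₂) :
    |(fromCols (Bmat n δ m₂) (Amat n L D δ m₂ * Bmat n δ m₁)).det| =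
      δ ^ (3 * n) / (m₁ * m₂) ^ n := by
  rw [Amat_mul_Bmat, Bmat_eq_fromRows n δ m₂, fromCols_fromRows_eq_fromBlocks,
    abs_det_fromBlocks_zero₁₁, det_smul, det_smul, det_one, Fintype.card_fin, mul_one,
    mul_one, abs_of_pos (by positivity), abs_of_pos (by positivity), ← mul_pow, pow_mul,
    ← div_pow]
  congr 1
  ring

theorem stmt_15_general (n : ℕ) (δ mlo mhi : ℝ) (hδ : 0 < δ)
    (hlo : 0 < mlo)
    (L D : Matrix (Fin n) (Fin n) ℝ) :
    ∀ m₁ ∈ Set.Icc mlo mhi, ∀ m₂ ∈ Set.Icc mlo mhi,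
      |(Matrix.fromCols (Bmat n δ m₂) (Amat n L D δ m₂ * Bmat n δ m₁)).det| =
          δ ^ (3 * n) / (m₁ * m₂) ^ n ∧
        δ ^ (3 * n) / mhi ^ (2 * n) ≤ δ ^ (3 * n) / (m₁ * m₂) ^ n := by
  rintro m₁ ⟨hlo₁, hhi₁⟩ m₂ ⟨hlo₂, hhi₂⟩
  have hm₁ : 0 < m₁ := hlo.trans_le hlo₁
  have hm₂ : 0 < m₂ := hlo.trans_le hlo₂
  refine ⟨abs_det_fromCols_Bmat_Amat_mul_Bmat n L D hδ hm₁ hm₂, ?_⟩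
  have hmhi : 0 ≤ mhi := hm₁.le.trans hhi₁
  rw [pow_mul mhi, sq]
  gcongr

theorem stmt_15 (n : ℕ) (hn : 1 ≤ n) (δ mlo mhi : ℝ) (hδ : 0 < δ)
    (hlo : 0 < mlo) (hlohi : mlo ≤ mhi)
    (L D : Matrix (Fin n) (Fin n) ℝ) :
    ∀ m₁ ∈ Set.Icc mlo mhi, ∀ m₂ ∈ Set.Icc mlo mhi,
      |(Matrix.fromCols (Bmat n δ m₂) (Amat n L D δ m₂ * Bmat n δ m₁)).det| =
          δ ^ (3 * n) / (m₁ * m₂) ^ n ∧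
        δ ^ (3 * n) / mhi ^ (2 * n) ≤ δ ^ (3 * n) / (m₁ * m₂) ^ n :=
  stmt_15_general n δ mlo mhi hδ hlo L D
end
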